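/- Let $I$ be an ideal of a commutative ring whose symbolic Rees algebra has generation type $d$, and let $h$ be a positive integer such that $I^{(i)} \subseteq I^{\lceil i/h \rceil}$ for all $1 \leq i \leq d$. Then $I^{(hn - h + 1)} \subseteq I^n$ for all $n \geq 1$. -/

import Mathlib

/-! Every generator `∏ᵢ J(i)^{aᵢ}` of `J(m)`, where `∑ i aᵢ = m`, lies in `I ^ ∑ ⌈i/h⌉ aᵢ` by the
low-degree containments, and `∑ ⌈i/h⌉ aᵢ ≥ ⌈m/h⌉` because ceiling division is superadditive.
For `m = hn - h + 1` this ceiling is `n`. -/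

open Finset

theorem Nat.ceilDiv_sum_mul_le {ι : Type*} (s : Finset ι) (w a : ι → ℕ) {h : ℕ} (hh : 0 < h) :
    (∑ i ∈ s, w i * a i) ⌈/⌉ h ≤ ∑ i ∈ s, w i ⌈/⌉ h * a i := by
  rw [ceilDiv_le_iff_le_mul hh, mul_sum]
  refine sum_le_sum fun i _ => ?_
  rw [← mul_assoc]
  exact Nat.mul_le_mul_right _ (le_smul_ceilDiv hh)

theorem Nat.le_ceilDiv_mul_sub_add_one {h : ℕ} (hh : 0 < h) (n : ℕ) :
    n ≤ (h * n - h + 1) ⌈/⌉ h := by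
  by_contra! hlt
  have := (ceilDiv_le_iff_le_mul hh).1 (Nat.le_sub_one_of_lt hlt)
  rw [Nat.mul_sub_one] at this
  omega

theorem Ideal.prod_pow_le_pow_sum {R ι : Type*} [CommSemiring R] (s : Finset ι)
    {K : ι → Ideal R} {I : Ideal R} {c : ι → ℕ} (hK : ∀ i ∈ s, K i ≤ I ^ c i) (a : ι → ℕ) :
    ∏ i ∈ s, K i ^ a i ≤ I ^ ∑ i ∈ s, c i * a i := by
  calc ∏ i ∈ s, K i ^ a i ≤ ∏ i ∈ s, (I ^ c i) ^ a i :=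
        prod_le_prod' fun i hi => pow_le_pow_left' (hK i hi) _
    _ = I ^ ∑ i ∈ s, c i * a i := by simp_rw [← pow_mul, prod_pow_eq_pow_sum]

theorem symbolicPower_le_pow_of_low_degree_containments_general {R : Type*} [CommRing R]
    (I : Ideal R) (J : ℕ → Ideal R) (d h : ℕ) (hh : 1 ≤ h)
    (hgen : ∀ n : ℕ, 1 ≤ n →
      J n = ⨆ (a : Fin d → ℕ) (_ : ∑ i : Fin d, (i.1 + 1) * a i = n),
              ∏ i : Fin d, J (i.1 + 1) ^ a i)
    (hlow : ∀ i : ℕ, 1 ≤ i → i ≤ d → J i ≤ I ^ ((i + h - 1) / h)) :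
    ∀ n : ℕ, 1 ≤ n → J (h * n - h + 1) ≤ I ^ n := by
  intro n _
  rw [hgen _ (Nat.le_add_left 1 _)]
  refine iSup₂_le fun a ha => ?_
  -- `(i + h - 1) / h` in `hlow` is by definition `i ⌈/⌉ h` on `ℕ`.
  have hgens : ∏ i : Fin d, J (i.1 + 1) ^ a i ≤ I ^ ∑ i : Fin d, (i.1 + 1) ⌈/⌉ h * a i :=
    Ideal.prod_pow_le_pow_sum _ (fun i _ => hlow _ i.1.succ_pos i.2) a
  refine hgens.trans (Ideal.pow_le_pow_right ?_)
  calc n ≤ (h * n - h + 1) ⌈/⌉ h := Nat.le_ceilDiv_mul_sub_add_one hh n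
    _ = (∑ i : Fin d, (i.1 + 1) * a i) ⌈/⌉ h := by rw [ha]
    _ ≤ ∑ i : Fin d, (i.1 + 1) ⌈/⌉ h * a i := Nat.ceilDiv_sum_mul_le _ _ _ hh

/-- If the symbolic Rees algebra of `I` has generation type `d` and
`I^{(i)} ⊆ I^{⌈i/h⌉}` for all `1 ≤ i ≤ d`, then `I^{(hn-h+1)} ⊆ I^n` for all `n ≥ 1`.
Here the ceiling `⌈i/h⌉` is written as `(i + h - 1) / h` in natural number division. -/
theorem symbolicPower_le_pow_of_low_degree_containments {R : Type*} [CommRing R]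
    (I : Ideal R) (J : ℕ → Ideal R) (d h : ℕ) (hd : 1 ≤ d) (hh : 1 ≤ h)
    (hJ1 : J 1 = I)
    (hgen : ∀ n : ℕ, 1 ≤ n →
      J n = ⨆ (a : Fin d → ℕ) (_ : ∑ i : Fin d, (i.1 + 1) * a i = n),
              ∏ i : Fin d, J (i.1 + 1) ^ a i)
    (hlow : ∀ i : ℕ, 1 ≤ i → i ≤ d → J i ≤ I ^ ((i + h - 1) / h)) :
    ∀ n : ℕ, 1 ≤ n → J (h * n - h + 1) ≤ I ^ n :=
  symbolicPower_le_pow_of_low_degree_containments_general I J d h hh hgen hlow
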